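/- (Second-order accuracy of the mid-point recurrence formula) Let τ > 0, Δt > 0, ξ = Δt/(2τ), and let g : [tₙ, tₙ + Δt] → ℝ be C². Then the approximation ∫_{tₙ}^{tₙ+Δt} exp(-(tₙ+Δt-s)/τ) g'(s) ds = exp(-ξ) (g(tₙ+Δt) - g(tₙ)) + R with remainder bound |R| ≤ K Δt³ for a constant K depending only on τ and bounds for g' and g'' on the interval. -/

import Mathlib

/-!
Let `m` be the midpoint of `[tₙ, tₙ + Δt]` and `f s = e^{-(tₙ+Δt-s)/τ}`, so that `e^{-Δt/(2τ)} = f m`.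
By the fundamental theorem of calculus the error is `∫ (f s - f m) g' s ds`, and since `s - m` has
integral zero we may also subtract `f' m (s - m) g' m`. The integrand becomes
`(f s - f m - f' m (s - m)) g' s + f' m (s - m) (g' s - g' m)`, which is `O((s - m)²)` by a Taylor
bound for `exp` on `(-∞, 0]` and the mean value inequality for `g'`; and `∫ (s - m)² ds = Δt³ / 12`.
-/

open Set

theorem abs_sub_sub_mul_le_of_abs_deriv_sub_le {φ φ' : ℝ → ℝ} {a b L : ℝ} (hL₀ : 0 ≤ L)
    (hφ : ∀ x ∈ uIcc a b, HasDerivAt φ (φ' x) x)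
    (hL : ∀ x ∈ uIcc a b, |φ' x - φ' a| ≤ L * |x - a|) :
    |φ b - φ a - φ' a * (b - a)| ≤ L * (b - a) ^ 2 := by
  have hderiv : ∀ x ∈ uIcc a b,
      HasDerivWithinAt (fun y => φ y - φ' a * y) (φ' x - φ' a) (uIcc a b) x := fun x hx =>
    ((hφ x hx).sub ((hasDerivAt_id x).const_mul (φ' a))).hasDerivWithinAt.congr_deriv (by simp)
  have hbound : ∀ x ∈ uIcc a b, ‖φ' x - φ' a‖ ≤ L * |b - a| := fun x hx =>
    (hL x hx).trans (mul_le_mul_of_nonneg_left (abs_sub_left_of_mem_uIcc hx) hL₀)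
  have := (convex_uIcc a b).norm_image_sub_le_of_norm_hasDerivWithin_le hderiv hbound
    left_mem_uIcc right_mem_uIcc
  calc |φ b - φ a - φ' a * (b - a)| = ‖(φ b - φ' a * b) - (φ a - φ' a * a)‖ := by
        rw [Real.norm_eq_abs]; ring_nf
    _ ≤ L * |b - a| * ‖b - a‖ := this
    _ = L * (b - a) ^ 2 := by rw [Real.norm_eq_abs, mul_assoc, ← sq, sq_abs]

theorem abs_exp_sub_exp_le_of_nonpos {x y : ℝ} (hx : x ≤ 0) (hy : y ≤ 0) :
    |Real.exp x - Real.exp y| ≤ |x - y| := by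
  have hbound : ∀ z ∈ Iic (0 : ℝ), ‖Real.exp z‖ ≤ 1 := fun z hz => by
    rw [Real.norm_eq_abs, abs_of_pos (Real.exp_pos z)]
    exact Real.exp_le_one_iff.mpr hz
  simpa using (convex_Iic 0).norm_image_sub_le_of_norm_hasDerivWithin_le
    (fun z _ => (Real.hasDerivAt_exp z).hasDerivWithinAt) hbound hy hx

theorem abs_exp_sub_exp_sub_mul_le_sq_of_nonpos {a b : ℝ} (ha : a ≤ 0) (hb : b ≤ 0) :
    |Real.exp a - Real.exp b - Real.exp b * (a - b)| ≤ (a - b) ^ 2 := by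
  have hnonpos : ∀ x ∈ uIcc b a, x ≤ 0 := fun x hx => hx.2.trans (max_le hb ha)
  simpa using abs_sub_sub_mul_le_of_abs_deriv_sub_le zero_le_one
    (fun x _ => Real.hasDerivAt_exp x)
    (fun x hx => (abs_exp_sub_exp_le_of_nonpos (hnonpos x hx) hb).trans_eq (one_mul _).symm)

theorem abs_exp_kernel_sub_taylor_le {τ T s m : ℝ} (hτ : 0 < τ) (hs : s ≤ T) (hm : m ≤ T) :
    |Real.exp (-(T - s) / τ) - Real.exp (-(T - m) / τ)
        - Real.exp (-(T - m) / τ) / τ * (s - m)| ≤ (s - m) ^ 2 / τ ^ 2 := by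
  have h := abs_exp_sub_exp_sub_mul_le_sq_of_nonpos
    (div_nonpos_of_nonpos_of_nonneg (neg_nonpos.2 (sub_nonneg.2 hs)) hτ.le)
    (div_nonpos_of_nonpos_of_nonneg (neg_nonpos.2 (sub_nonneg.2 hm)) hτ.le)
  convert h using 3 <;> field_simp <;> ring

theorem integral_sub_midpoint (a b : ℝ) : ∫ s in a..b, (s - (a + b) / 2) = 0 := by
  simp only [intervalIntegral.integral_comp_sub_right (fun x => x), integral_id]
  ring

theorem integral_sub_midpoint_sq (a b : ℝ) :
    ∫ s in a..b, (s - (a + b) / 2) ^ 2 = (b - a) ^ 3 / 12 := by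
  simp only [intervalIntegral.integral_comp_sub_right (fun x => x ^ 2), integral_pow]
  ring

theorem abs_mul_sub_mul_sub_mul_le {u u₀ v v₀ d D A B M h : ℝ}
    (hu : |u - u₀ - d * h| ≤ A * h ^ 2) (hd : |d| ≤ D)
    (hv : |v - v₀| ≤ B * |h|) (hvM : |v| ≤ M) :
    |u * v - u₀ * v - d * v₀ * h| ≤ (A * M + D * B) * h ^ 2 := by
  have hD : 0 ≤ D := (abs_nonneg d).trans hd
  have h₁ : |(u - u₀ - d * h) * v| ≤ A * h ^ 2 * M := by
    rw [abs_mul]; exact mul_le_mul hu hvM (abs_nonneg v) ((abs_nonneg _).trans hu)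
  have h₂ : |d * h * (v - v₀)| ≤ D * |h| * (B * |h|) := by
    rw [abs_mul, abs_mul]
    exact mul_le_mul (mul_le_mul_of_nonneg_right hd (abs_nonneg h)) hv (abs_nonneg _)
      (mul_nonneg hD (abs_nonneg h))
  calc |u * v - u₀ * v - d * v₀ * h| = |(u - u₀ - d * h) * v + d * h * (v - v₀)| := by ring_nf
    _ ≤ A * h ^ 2 * M + D * |h| * (B * |h|) := (abs_add_le _ _).trans (add_le_add h₁ h₂)
    _ = (A * M + D * B) * h ^ 2 := by rw [← sq_abs h]; ring

theorem abs_integral_mul_sub_midpoint_mul_integral_le {f g : ℝ → ℝ} {a b d D A B M : ℝ}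
    (hab : a ≤ b) (hf : ContinuousOn f (Icc a b)) (hg : ContinuousOn g (Icc a b))
    (hf_taylor : ∀ s ∈ Icc a b,
      |f s - f ((a + b) / 2) - d * (s - (a + b) / 2)| ≤ A * (s - (a + b) / 2) ^ 2)
    (hd : |d| ≤ D)
    (hg_lip : ∀ s ∈ Icc a b, |g s - g ((a + b) / 2)| ≤ B * |s - (a + b) / 2|)
    (hg_bdd : ∀ s ∈ Icc a b, |g s| ≤ M) :
    |(∫ s in a..b, f s * g s) - f ((a + b) / 2) * ∫ s in a..b, g s|
      ≤ (A * M + D * B) * (b - a) ^ 3 / 12 := by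
  set m := (a + b) / 2
  rw [← uIcc_of_le hab] at hf hg
  have hfg : IntervalIntegrable (fun s => f s * g s) MeasureTheory.volume a b :=
    (hf.mul hg).intervalIntegrable
  have hmg : IntervalIntegrable (fun s => f m * g s) MeasureTheory.volume a b :=
    hg.intervalIntegrable.const_mul _
  have hlin : IntervalIntegrable (fun s => d * g m * (s - m)) MeasureTheory.volume a b :=
    Continuous.intervalIntegrable (by fun_prop) _ _
  have herror : (∫ s in a..b, f s * g s) - f m * ∫ s in a..b, g s
      = ∫ s in a..b, (f s * g s - f m * g s - d * g m * (s - m)) := by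
    rw [intervalIntegral.integral_sub (hfg.sub hmg) hlin, intervalIntegral.integral_sub hfg hmg,
      intervalIntegral.integral_const_mul, intervalIntegral.integral_const_mul,
      integral_sub_midpoint, mul_zero, sub_zero]
  rw [herror, ← Real.norm_eq_abs, mul_div_assoc, ← integral_sub_midpoint_sq,
    ← intervalIntegral.integral_const_mul]
  refine intervalIntegral.norm_integral_le_of_norm_le hab
    (Filter.Eventually.of_forall fun s hs => ?_) (Continuous.intervalIntegrable (by fun_prop) _ _)
  have hs' : s ∈ Icc a b := Ioc_subset_Icc_self hs
  exact abs_mul_sub_mul_sub_mul_le (hf_taylor s hs') hd (hg_lip s hs') (hg_bdd s hs')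

theorem midpoint_recurrence_second_order_general
    (τ M₁ M₂ : ℝ) (hτ : 0 < τ) :
    ∃ K : ℝ, ∀ (g g' g'' : ℝ → ℝ) (tn Δt : ℝ), 0 < Δt →
      (∀ s ∈ Set.Icc tn (tn + Δt), HasDerivAt g (g' s) s) →
      (∀ s ∈ Set.Icc tn (tn + Δt), HasDerivAt g' (g'' s) s) →
      (∀ s ∈ Set.Icc tn (tn + Δt), |g' s| ≤ M₁) →
      (∀ s ∈ Set.Icc tn (tn + Δt), |g'' s| ≤ M₂) →
      |(∫ s in tn..(tn + Δt), Real.exp (-(tn + Δt - s) / τ) * g' s)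
          - Real.exp (-(Δt / (2 * τ))) * (g (tn + Δt) - g tn)|
        ≤ K * Δt ^ 3 := by
  refine ⟨(M₁ / τ ^ 2 + M₂ / τ) / 12, fun g g' g'' tn Δt hΔt hg hg' hg'_bdd hg''_bdd => ?_⟩
  set T := tn + Δt with hT
  set m := (tn + T) / 2 with hm_def
  have hab : tn ≤ T := by linarith
  have hm : m ∈ Icc tn T := ⟨by linarith, by linarith⟩
  have hg'_cont : ContinuousOn g' (Icc tn T) := fun s hs =>
    (hg' s hs).continuousAt.continuousWithinAt
  have hftc : ∫ s in tn..T, g' s = g T - g tn :=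
    intervalIntegral.integral_eq_sub_of_hasDerivAt (fun s hs => hg s (uIcc_of_le hab ▸ hs))
      (hg'_cont.intervalIntegrable_of_Icc hab)
  have hkernel_mid : Real.exp (-(Δt / (2 * τ))) = Real.exp (-(T - m) / τ) := by
    congr 1; field_simp; ring
  have hg'_lip : ∀ s ∈ Icc tn T, |g' s - g' m| ≤ M₂ * |s - m| := fun s hs => by
    simpa using (convex_Icc tn T).norm_image_sub_le_of_norm_hasDerivWithin_le
      (fun x hx => (hg' x hx).hasDerivWithinAt) (fun x hx => by simpa using hg''_bdd x hx) hm hs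
  have hd : |Real.exp (-(T - m) / τ) / τ| ≤ 1 / τ := by
    rw [abs_of_pos (by positivity)]
    exact div_le_div_of_nonneg_right (Real.exp_le_one_iff.2
      (div_nonpos_of_nonpos_of_nonneg (by linarith [hm.2]) hτ.le)) hτ.le
  have := abs_integral_mul_sub_midpoint_mul_integral_le (f := fun s => Real.exp (-(T - s) / τ))
    (A := 1 / τ ^ 2) hab (by fun_prop) hg'_cont
    (fun s hs => (abs_exp_kernel_sub_taylor_le hτ hs.2 hm.2).trans_eq (by ring)) hd hg'_lip
    hg'_bdd
  rw [hftc, ← hkernel_mid] at this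
  calc _ ≤ _ := this
    _ = _ := by rw [hT]; ring

/-- Second-order accuracy of the mid-point recurrence formula: for `τ > 0` and
bounds `M₁, M₂` on `g'` and `g''`, there is a constant `K` (depending only on
`τ`, `M₁`, `M₂`) such that for every C² function `g` on `[tₙ, tₙ + Δt]`,
`∫_{tₙ}^{tₙ+Δt} e^{-(tₙ+Δt-s)/τ} g'(s) ds = e^{-Δt/(2τ)} (g(tₙ+Δt) - g(tₙ)) + R`
with `|R| ≤ K Δt³`. -/
theorem midpoint_recurrence_second_order
    (τ M₁ M₂ : ℝ) (hτ : 0 < τ) (hM₁ : 0 ≤ M₁) (hM₂ : 0 ≤ M₂) :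
    ∃ K : ℝ, ∀ (g g' g'' : ℝ → ℝ) (tn Δt : ℝ), 0 < Δt →
      (∀ s ∈ Set.Icc tn (tn + Δt), HasDerivAt g (g' s) s) →
      (∀ s ∈ Set.Icc tn (tn + Δt), HasDerivAt g' (g'' s) s) →
      (∀ s ∈ Set.Icc tn (tn + Δt), |g' s| ≤ M₁) →
      (∀ s ∈ Set.Icc tn (tn + Δt), |g'' s| ≤ M₂) →
      |(∫ s in tn..(tn + Δt), Real.exp (-(tn + Δt - s) / τ) * g' s)
          - Real.exp (-(Δt / (2 * τ))) * (g (tn + Δt) - g tn)|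
        ≤ K * Δt ^ 3 :=
  midpoint_recurrence_second_order_general τ M₁ M₂ hτ
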